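/- arXiv:2403.00358 — 5 statements merged into one kernel-verified Lean document; each statement's English description precedes it below -/
import Mathlib

section
/- Let A ⊆ ℝ² be a connected open set. Then the convex hull of A equals the set of points lying on a line segment with both endpoints in A, i.e., Co(A) = {x : ∃ a, b ∈ A, x ∈ [a,b]}. -/
/-!
Let x ∈ Co(A) lie on no segment [a, b] with a, b ∈ A. Then no two points of A - x lie on opposite
rays from the origin. Measured from one fixed point of A - x, the angle of p - x therefore never
equals π, so it depends continuously on p ∈ A; its range is an interval containing no two values
π apart, hence lies in an interval of length π. So A lies in a closed half-plane bounded by a line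
through x, and, being open, in the open half-plane, which contradicts x ∈ Co(A).
-/

open Complex Module Set

theorem Set.OrdConnected.exists_subset_Icc_add {I : Set ℝ} (hI : I.OrdConnected) (hbdd : BddBelow I)
    {d : ℝ} (hd : 0 ≤ d) (hgap : ∀ b ∈ I, b + d ∉ I) : ∃ c, I ⊆ Icc c (c + d) := by
  refine ⟨sInf I, fun y hy => ⟨csInf_le hbdd hy, not_lt.1 fun hlt => ?_⟩⟩
  obtain ⟨b, hb, hby⟩ := exists_lt_of_csInf_lt ⟨y, hy⟩ (lt_sub_iff_add_lt.2 hlt)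
  exact hgap b hb (hI.out hb hy ⟨le_add_of_nonneg_right hd, by linarith⟩)

theorem Complex.re_exp_neg_mul_I_mul (θ : ℝ) (z : ℂ) :
    (exp (-θ * I) * z).re = ‖z‖ * Real.cos (arg z - θ) := by
  conv_lhs => rw [← norm_mul_exp_arg_mul_I z]
  rw [mul_left_comm, ← exp_add, ← exp_ofReal_mul_I_re (arg z - θ), ← re_ofReal_mul]
  push_cast
  ring_nf

theorem Complex.exists_forall_nonneg_re_mul {S : Set ℂ} (hS : IsPreconnected S)
    (hopp : ∀ p ∈ S, ∀ q ∈ S, ¬SameRay ℝ (-p) q) : ∃ w ≠ 0, ∀ p ∈ S, 0 ≤ (w * p).re := by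
  rcases S.eq_empty_or_nonempty with rfl | ⟨p₀, hp₀⟩
  · exact ⟨1, one_ne_zero, by simp⟩
  have hne : ∀ p ∈ S, p ≠ 0 := by
    rintro p hp rfl
    exact hopp 0 hp p₀ hp₀ (by simp)
  set h : ℂ → ℝ := fun p => arg (p / p₀)
  have hgap : ∀ p ∈ S, ∀ q ∈ S, h p ≠ h q + Real.pi := by
    intro p hp q hq hpq
    refine hopp q hq p hp (sameRay_iff.2 (Or.inr (Or.inr ?_)))
    rw [← arg_coe_angle_eq_iff, arg_neg_coe_angle (hne q hq)]
    have := congrArg (fun t : ℝ => (t : Real.Angle)) hpq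
    simp only [h, Real.Angle.coe_add, arg_div_coe_angle (hne p hp) (hne p₀ hp₀),
      arg_div_coe_angle (hne q hq) (hne p₀ hp₀)] at this
    rw [sub_add_eq_add_sub, sub_left_inj] at this
    exact this.symm
  have hslit : ∀ p ∈ S, p / p₀ ∈ slitPlane := by
    refine fun p hp => mem_slitPlane_iff_arg.2 ⟨fun hπ => hgap p hp p₀ hp₀ ?_,
      div_ne_zero (hne p hp) (hne p₀ hp₀)⟩
    simp [h, hπ]
  have hcont : ContinuousOn h S := fun p hp =>
    ((continuousAt_arg (hslit p hp)).comp (f := (· / p₀))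
      (continuousAt_id.div_const p₀)).continuousWithinAt
  obtain ⟨c, hc⟩ := (hS.image h hcont).ordConnected.exists_subset_Icc_add
    ⟨-Real.pi, forall_mem_image.2 fun p _ => (neg_pi_lt_arg _).le⟩ Real.pi_pos.le
    (forall_mem_image.2 fun q hq ⟨p, hp, hpq⟩ => hgap p hp q hq hpq)
  -- rotating by `-(c + π/2)` carries the sector `c ≤ arg (p / p₀) ≤ c + π` onto the right half-plane
  refine ⟨exp (-(c + Real.pi / 2 : ℝ) * I) / p₀,
    div_ne_zero (exp_ne_zero _) (hne p₀ hp₀), fun p hp => ?_⟩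
  obtain ⟨hcp, hpc⟩ := hc (mem_image_of_mem h hp)
  rw [div_mul_eq_mul_div, mul_div_assoc, re_exp_neg_mul_I_mul]
  exact mul_nonneg (norm_nonneg _) (Real.cos_nonneg_of_mem_Icc ⟨by linarith, by linarith⟩)

theorem exists_forall_nonneg_of_finrank_eq_two {E : Type*} [NormedAddCommGroup E] [NormedSpace ℝ E]
    (hE : finrank ℝ E = 2) {S : Set E} (hS : IsPreconnected S)
    (hopp : ∀ p ∈ S, ∀ q ∈ S, ¬SameRay ℝ (-p) q) :
    ∃ f : StrongDual ℝ E, f ≠ 0 ∧ ∀ p ∈ S, 0 ≤ f p := by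
  have : FiniteDimensional ℝ E := .of_finrank_pos (by omega)
  let e : E ≃L[ℝ] ℂ := .ofFinrankEq (hE.trans finrank_real_complex.symm)
  obtain ⟨w, hw, hS'⟩ := exists_forall_nonneg_re_mul (hS.image e e.continuous.continuousOn)
    (forall_mem_image.2 fun p hp => forall_mem_image.2 fun q hq hpq =>
      hopp p hp q hq ((SameRay.sameRay_map_iff e.toLinearEquiv).1 (by simpa using hpq)))
  refine ⟨reCLM.comp ((ContinuousLinearMap.mul ℝ ℂ w).comp (e : E →L[ℝ] ℂ)), fun hf => ?_,
    fun p hp => hS' (e p) (mem_image_of_mem e hp)⟩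
  have := congrArg (fun f : StrongDual ℝ E => f (e.symm w⁻¹)) hf
  simp [hw] at this

theorem StrongDual.lt_of_forall_le_of_isOpen {E : Type*} [NormedAddCommGroup E] [NormedSpace ℝ E]
    {f : StrongDual ℝ E} (hf : f ≠ 0) {U : Set E} (hU : IsOpen U) {a : ℝ}
    (hle : ∀ p ∈ U, a ≤ f p) {p : E} (hp : p ∈ U) : a < f p := by
  refine (hle p hp).lt_of_ne fun heq => hf ?_
  have hmin : IsLocalMin f p := by
    filter_upwards [hU.mem_nhds hp] with q hq
    exact heq ▸ hle q hq
  exact hmin.hasFDerivAt_eq_zero f.hasFDerivAt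

theorem convexHull_eq_setOf_mem_segment {E : Type*} [NormedAddCommGroup E] [NormedSpace ℝ E]
    (hE : finrank ℝ E = 2) {A : Set E} (hA : IsOpen A) (hA' : IsPreconnected A) :
    convexHull ℝ A = {x | ∃ a ∈ A, ∃ b ∈ A, x ∈ segment ℝ a b} := by
  refine subset_antisymm (fun x hx => ?_) ?_
  · show ∃ a ∈ A, ∃ b ∈ A, x ∈ segment ℝ a b
    by_contra! hseg
    obtain ⟨f, hf, hfA⟩ := exists_forall_nonneg_of_finrank_eq_two hE
      (hA'.image (· - x) (continuous_sub_right x).continuousOn)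
      (forall_mem_image.2 fun p hp => forall_mem_image.2 fun q hq hpq =>
        hseg p hp q hq (mem_segment_iff_sameRay.2 (by simpa using hpq)))
    have hlt : A ⊆ {p | f x < f p} := fun p hp =>
      f.lt_of_forall_le_of_isOpen hf hA (fun q hq => by simpa using hfA _ (mem_image_of_mem _ hq)) hp
    exact lt_irrefl (f x) (convexHull_min hlt (convex_halfSpace_gt f.isLinear (f x)) hx)
  · rintro x ⟨a, ha, b, hb, hx⟩
    exact (convex_convexHull ℝ A).segment_subset (subset_convexHull ℝ A ha)
      (subset_convexHull ℝ A hb) hx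

theorem stmt_5 (A : Set (EuclideanSpace ℝ (Fin 2)))
    (hopen : IsOpen A) (hconn : IsConnected A) :
    convexHull ℝ A = {x | ∃ a ∈ A, ∃ b ∈ A, x ∈ segment ℝ a b} :=
  convexHull_eq_setOf_mem_segment finrank_euclideanSpace_fin hopen hconn.isPreconnected
end

section
/- Fix ν > 0 and ε ≤ √2/ν, and define T(R) = sqrt((R - νε²)² + 2ε²). If R_0 > ν⁻¹ + (ν/2)ε², then the sequence R_{n+1} = T(R_n) satisfies R_n > ν⁻¹ + (ν/2)ε² for all n and is (weakly) decreasing. -/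
theorem stmt_11 (ν ε : ℝ) (hν : 0 < ν) (hε : 0 < ε) (hε2 : ε ≤ Real.sqrt 2 / ν)
    (R : ℕ → ℝ)
    (hrec : ∀ n, R (n + 1) = Real.sqrt ((R n - ν * ε ^ 2) ^ 2 + 2 * ε ^ 2))
    (h0 : ν⁻¹ + (ν / 2) * ε ^ 2 < R 0) :
    (∀ n, ν⁻¹ + (ν / 2) * ε ^ 2 < R n) ∧ Antitone R := by
  have hνε : ν * ε ≤ Real.sqrt 2 := by
    rw [le_div_iff₀ hν] at hε2; linarith [hε2, mul_comm ε ν]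
  have hs2 : Real.sqrt 2 ^ 2 = 2 := Real.sq_sqrt (by norm_num)
  have hνε2 : ν ^ 2 * ε ^ 2 ≤ 2 := by
    nlinarith [mul_le_mul hνε hνε (by positivity) (Real.sqrt_nonneg 2)]
  have h1 : ν⁻¹ * (ν * ε ^ 2) = ε ^ 2 := by field_simp
  have h2 : ν⁻¹ * ν = 1 := inv_mul_cancel₀ hν.ne'
  have hinvpos : 0 < ν⁻¹ := inv_pos.mpr hν
  have hcν : ν * ε ^ 2 ≤ ν⁻¹ + (ν / 2) * ε ^ 2 := by nlinarith
  have hc0 : 0 < ν⁻¹ + (ν / 2) * ε ^ 2 := by positivity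
  have key : ∀ n, ν⁻¹ + (ν / 2) * ε ^ 2 < R n →
      ν⁻¹ + (ν / 2) * ε ^ 2 < R (n + 1) ∧ R (n + 1) ≤ R n := by
    intro n hn
    rw [hrec n]
    constructor
    · rw [show ν⁻¹ + (ν / 2) * ε ^ 2
          = Real.sqrt ((ν⁻¹ + (ν / 2) * ε ^ 2) ^ 2) by rw [Real.sqrt_sq hc0.le]]
      apply Real.sqrt_lt_sqrt (by positivity)
      nlinarith [mul_pos (sub_pos.mpr hn)
        (show 0 < R n + (ν⁻¹ + (ν / 2) * ε ^ 2) - 2 * (ν * ε ^ 2) by linarith)]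
    · have hxpos : 0 < R n := lt_trans hc0 hn
      have hsq : (R n - ν * ε ^ 2) ^ 2 + 2 * ε ^ 2 ≤ (R n) ^ 2 := by
        nlinarith [mul_le_mul_of_nonneg_left hn.le (show (0:ℝ) ≤ 2 * ν by linarith)]
      calc Real.sqrt ((R n - ν * ε ^ 2) ^ 2 + 2 * ε ^ 2)
          ≤ Real.sqrt ((R n) ^ 2) := Real.sqrt_le_sqrt hsq
        _ = R n := Real.sqrt_sq hxpos.le
  have hall : ∀ n, ν⁻¹ + (ν / 2) * ε ^ 2 < R n := by
    intro n; induction n with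
    | zero => exact h0
    | succ k ih => exact (key k ih).1
  exact ⟨hall, antitone_nat_of_succ_le fun n => (key n (hall n)).2⟩
end

section
/- Fix ν > 0 and 0 < ε < √2/ν, and define T(R) = sqrt((R - νε²)² + 2ε²). If νε² ≤ R_0 < ν⁻¹ + (ν/2)ε², then the sequence R_{n+1} = T(R_n) satisfies R_n < ν⁻¹ + (ν/2)ε² for all n and is (weakly) increasing. -/
theorem stmt_12 (ν ε : ℝ) (hν : 0 < ν) (hε : 0 < ε) (hε2 : ε < Real.sqrt 2 / ν)
    (R : ℕ → ℝ)
    (hrec : ∀ n, R (n + 1) = Real.sqrt ((R n - ν * ε ^ 2) ^ 2 + 2 * ε ^ 2))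
    (h0 : ν * ε ^ 2 ≤ R 0) (h0' : R 0 < ν⁻¹ + (ν / 2) * ε ^ 2) :
    (∀ n, R n < ν⁻¹ + (ν / 2) * ε ^ 2) ∧ Monotone R := by
  have hνε : ν * ε < Real.sqrt 2 := by
    rw [div_eq_mul_inv] at hε2
    calc ν * ε < ν * (Real.sqrt 2 * ν⁻¹) := by
          exact mul_lt_mul_of_pos_left hε2 hν
      _ = Real.sqrt 2 * (ν * ν⁻¹) := by ring
      _ = Real.sqrt 2 := by rw [mul_inv_cancel₀ hν.ne', mul_one]
  have hsq2 : (Real.sqrt 2) ^ 2 = 2 := Real.sq_sqrt (by norm_num)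
  have hνε2 : ν ^ 2 * ε ^ 2 < 2 := by nlinarith [mul_pos hν hε, Real.sqrt_nonneg 2]
  have hinv : ν * ν⁻¹ = 1 := mul_inv_cancel₀ hν.ne'
  have hBpos : 0 < ν⁻¹ + (ν / 2) * ε ^ 2 := by positivity
  have key : ∀ n, ν * ε ^ 2 ≤ R n ∧ R n < ν⁻¹ + (ν / 2) * ε ^ 2 := by
    intro n
    induction n with
    | zero => exact ⟨h0, h0'⟩
    | succ n ih =>
      obtain ⟨ha, hb⟩ := ih
      constructor
      · rw [hrec]
        rw [show ν * ε ^ 2 = Real.sqrt ((ν * ε ^ 2) ^ 2) from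
          (Real.sqrt_sq (by positivity)).symm]
        apply Real.sqrt_le_sqrt
        nlinarith [sq_nonneg (R n - ν * ε ^ 2)]
      · rw [hrec]
        rw [show ν⁻¹ + (ν / 2) * ε ^ 2 =
          Real.sqrt ((ν⁻¹ + (ν / 2) * ε ^ 2) ^ 2) from
          (Real.sqrt_sq hBpos.le).symm]
        apply Real.sqrt_lt_sqrt (by positivity)
        have h1 : (R n - ν * ε ^ 2) ^ 2 < (ν⁻¹ + (ν / 2) * ε ^ 2 - ν * ε ^ 2) ^ 2 := by
          have h2 : 0 ≤ R n - ν * ε ^ 2 := by linarith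
          have h3 : ν * ε ^ 2 ≤ ν⁻¹ + (ν / 2) * ε ^ 2 := by
            nlinarith [inv_pos.mpr hν]
          nlinarith
        nlinarith [sq_nonneg ε]
  refine ⟨fun n => (key n).2, monotone_nat_of_le_succ ?_⟩
  intro n
  obtain ⟨ha, hb⟩ := key n
  have hR0 : 0 ≤ R n := le_trans (by positivity) ha
  have hinv2 : ν * ε ^ 2 * ν⁻¹ = ε ^ 2 := by
    field_simp
  rw [hrec, Real.le_sqrt hR0]
  nlinarith [mul_lt_mul_of_pos_left hb (show (0:ℝ) < ν * ε ^ 2 by positivity)]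
  positivity
end

section
/- Fix ν > 0 and 0 < ε ≤ √2/ν, and let R_{n+1} = sqrt((R_n - νε²)² + 2ε²) with R_0 ≥ νε². Then the sequence R_n converges to ν⁻¹ + (ν/2)ε² as n → ∞. -/
open Filter

set_option maxHeartbeats 1000000 in

theorem stmt_13 (ν ε : ℝ) (hν : 0 < ν) (hε : 0 < ε) (hε2 : ε ≤ Real.sqrt 2 / ν)
    (R : ℕ → ℝ)
    (hrec : ∀ n, R (n + 1) = Real.sqrt ((R n - ν * ε ^ 2) ^ 2 + 2 * ε ^ 2))
    (h0 : ν * ε ^ 2 ≤ R 0) :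
    Filter.Tendsto R Filter.atTop (nhds (ν⁻¹ + (ν / 2) * ε ^ 2)) := by
  set a := ν * ε ^ 2 with ha
  set L := ν⁻¹ + (ν / 2) * ε ^ 2 with hL
  have ha0 : 0 < a := by positivity
  -- ε² ≤ 2/ν²
  have hε2' : ν * ε ≤ Real.sqrt 2 := by
    rw [le_div_iff₀ hν] at hε2; linarith [hε2]
  have hsq : ν ^ 2 * ε ^ 2 ≤ 2 := by
    have h2 := Real.sq_sqrt (by norm_num : (0:ℝ) ≤ 2)
    have h3 := mul_le_mul hε2' hε2' (by positivity) (Real.sqrt_nonneg 2)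
    nlinarith
  have haL : a ≤ L := by
    rw [ha, hL]
    rw [← sub_nonneg]
    have : ν⁻¹ + ν / 2 * ε ^ 2 - ν * ε ^ 2 = (2 - ν^2 * ε^2) / (2 * ν) := by
      field_simp; ring
    rw [this]
    apply div_nonneg (by linarith) (by linarith)
  have hL0 : 0 < L := by
    have : 0 < ν⁻¹ := by positivity
    have : 0 ≤ (ν/2) * ε^2 := by positivity
    rw [hL]; positivity
  -- nonnegativity of arg
  have harg : ∀ n, 0 ≤ (R n - a) ^ 2 + 2 * ε ^ 2 := fun n => by positivity
  have hRpos : ∀ n, 0 ≤ R (n + 1) := fun n => by rw [hrec n]; exact Real.sqrt_nonneg _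
  have hsqid : ∀ n, R (n + 1) ^ 2 = (R n - a) ^ 2 + 2 * ε ^ 2 := fun n => by
    rw [hrec n, Real.sq_sqrt (harg n)]
  -- a ≤ R n for all n
  have hlow : ∀ n, a ≤ R n := by
    intro n
    cases n with
    | zero => exact h0
    | succ m =>
      have h1 : a ^ 2 ≤ R (m + 1) ^ 2 := by
        rw [hsqid m]
        nlinarith [sq_nonneg (R m - a), hsq, sq_nonneg ε]
      nlinarith [hRpos m, ha0]
  -- key fixed point identity: L² = (L-a)² + 2ε²
  have hLfix : L ^ 2 = (L - a) ^ 2 + 2 * ε ^ 2 := by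
    rw [hL, ha]; field_simp; ring
  have h2aL : 2 * a * L = a ^ 2 + 2 * ε ^ 2 := by nlinarith [hLfix]
  -- existence of a limit ℓ ≥ a
  have hexist : ∃ ℓ, a ≤ ℓ ∧ Tendsto R atTop (nhds ℓ) := by
    rcases le_total (R 0) L with hc | hc
    · -- increasing, bounded above by L
      have hub : ∀ n, R n ≤ L := by
        intro n
        induction n with
        | zero => exact hc
        | succ m ih =>
          have h1 : R (m + 1) ^ 2 ≤ L ^ 2 := by
            rw [hsqid m, hLfix]
            nlinarith [hlow m, haL]
          nlinarith [hRpos m, hL0]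
      have hmono : Monotone R := by
        apply monotone_nat_of_le_succ
        intro n
        have h1 : R n ^ 2 ≤ R (n + 1) ^ 2 := by
          rw [hsqid n]
          nlinarith [h2aL, mul_le_mul_of_nonneg_left (hub n) ha0.le]
        nlinarith [hRpos n, hlow n, ha0]
      have hbdd : BddAbove (Set.range R) := ⟨L, by rintro x ⟨n, rfl⟩; exact hub n⟩
      refine ⟨⨆ n, R n, ?_, tendsto_atTop_ciSup hmono hbdd⟩
      exact le_ciSup_of_le hbdd 0 (hlow 0)
    · -- decreasing, bounded below by L
      have hlb : ∀ n, L ≤ R n := by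
        intro n
        induction n with
        | zero => exact hc
        | succ m ih =>
          have h1 : L ^ 2 ≤ R (m + 1) ^ 2 := by
            rw [hsqid m, hLfix]
            nlinarith [haL]
          nlinarith [hRpos m, hL0]
      have hanti : Antitone R := by
        apply antitone_nat_of_succ_le
        intro n
        have h1 : R (n + 1) ^ 2 ≤ R n ^ 2 := by
          rw [hsqid n]
          nlinarith [h2aL, mul_le_mul_of_nonneg_left (hlb n) ha0.le]
        nlinarith [hRpos n, hlow n, ha0]
      have hbdd : BddBelow (Set.range R) := ⟨L, by rintro x ⟨n, rfl⟩; exact hlb n⟩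
      refine ⟨_, ?_, tendsto_atTop_ciInf hanti hbdd⟩
      exact le_ciInf fun n => hlow n
  obtain ⟨ℓ, hℓa, htend⟩ := hexist
  -- pass to the limit in the recursion
  have h1 : Tendsto (fun n => R (n + 1)) atTop (nhds ℓ) :=
    htend.comp (tendsto_add_atTop_nat 1)
  have h2 : Tendsto (fun n => Real.sqrt ((R n - a) ^ 2 + 2 * ε ^ 2)) atTop
      (nhds (Real.sqrt ((ℓ - a) ^ 2 + 2 * ε ^ 2))) :=
    (((htend.sub tendsto_const_nhds).pow 2).add tendsto_const_nhds).sqrt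
  have heq : ℓ = Real.sqrt ((ℓ - a) ^ 2 + 2 * ε ^ 2) := by
    apply tendsto_nhds_unique h1
    have : (fun n => R (n + 1)) = fun n => Real.sqrt ((R n - a) ^ 2 + 2 * ε ^ 2) := by
      funext n; exact hrec n
    rw [this]; exact h2
  have hℓ0 : 0 ≤ ℓ := le_trans ha0.le hℓa
  have hℓsq : ℓ ^ 2 = (ℓ - a) ^ 2 + 2 * ε ^ 2 := by
    conv_lhs => rw [heq]
    exact Real.sq_sqrt (by positivity)
  have : ℓ = L := by
    have hkey : 2 * a * ℓ = a ^ 2 + 2 * ε ^ 2 := by nlinarith [hℓsq]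
    have hLkey : 2 * a * L = a ^ 2 + 2 * ε ^ 2 := by nlinarith [hLfix]
    have := hkey.trans hLkey.symm
    have h2a : (0:ℝ) < 2 * a := by linarith
    exact mul_left_cancel₀ (ne_of_gt h2a) this
  rw [← this]; exact htend
end

section
/- Fix ν > 0, h > 0, and define T_h(R) = sqrt((R - νh)² + 2h). Then for every real R, T_h(R) > T_{h/2}(T_{h/2}(R)). -/
theorem stmt_17 (ν h : ℝ) (hν : 0 < ν) (hh : 0 < h) (R : ℝ) :
    Real.sqrt ((Real.sqrt ((R - ν * (h / 2)) ^ 2 + 2 * (h / 2)) - ν * (h / 2)) ^ 2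
        + 2 * (h / 2))
      < Real.sqrt ((R - ν * h) ^ 2 + 2 * h) := by
  set a := ν * (h / 2) with ha
  have hapos : 0 < a := by positivity
  set s := Real.sqrt ((R - a) ^ 2 + 2 * (h / 2)) with hs
  have hs2 : s ^ 2 = (R - a) ^ 2 + 2 * (h / 2) := by
    rw [hs]; exact Real.sq_sqrt (by positivity)
  have hgt : R - a < s := by
    have h1 : Real.sqrt ((R - a) ^ 2) < s := by
      rw [hs]; exact Real.sqrt_lt_sqrt (sq_nonneg _) (by linarith)
    rw [Real.sqrt_sq_eq_abs] at h1
    calc R - a ≤ |R - a| := le_abs_self _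
      _ < s := h1
  have h2a : ν * h = 2 * a := by rw [ha]; ring
  have key : (s - a) ^ 2 + 2 * (h / 2) < (R - ν * h) ^ 2 + 2 * h := by
    have hd : (R - ν * h) ^ 2 + 2 * h - ((s - a) ^ 2 + 2 * (h / 2))
        = 2 * a * (s - (R - a)) := by
      rw [h2a]; nlinarith [hs2]
    nlinarith [mul_pos hapos (sub_pos.mpr hgt)]
  exact Real.sqrt_lt_sqrt (by positivity) key
end
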